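/- Let λ_1 > 0, α_1 > 1 be reals, λ_2, α_2 ∈ ℂ with 0 < |α_2| < α_1 and |λ_2 α_2| < λ_1 α_1, and suppose a_n := λ_1 α_1^n + λ_2 α_2^n is a positive integer for all n ≥ 1 (a degree-2 Lucas-type sequence). Then for |z| < α_1^{Re(s)}: ∑_{n=1}^∞ z^n a_n^{-s} = ∑_{k=0}^∞ C(-s,k) λ_1^{-s-k} λ_2^{k} / (z^{-1} α_1^{s+k} α_2^{-k} - 1), the right-hand series converging whenever z^{-1} α_1^{s+k} α_2^{-k} ≠ 1 for all k ≥ 0. -/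

import Mathlib

/-!
Write `a m = λ₁ α₁^m (1 + X_m)` with `X_m = (λ₂/λ₁)(α₂/α₁)^m`, so `‖X_m‖ < 1`. The binomial
series turns `z^m a_m^{-s}` into `∑ₖ b_k W_k^m` with `b_k = λ₁^{-s} C(-s,k) (λ₂/λ₁)^k` and
`W_k = z α₁^{-s} (α₂/α₁)^k`. As `‖W_k‖ ≤ ‖z α₁^{-s}‖ < 1` and `‖b_k W_k‖` is dominated by
`‖C(-s,k)‖ (‖λ₂α₂‖/(λ₁α₁))^k`, the double series converges absolutely, and summing over `m ≥ 1`
first gives the geometric sums `b_k W_k / (1 - W_k) = b_k / (W_k⁻¹ - 1)`.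
-/

open Complex Filter Topology

/-- Generalized binomial coefficient `C(a, j) = a(a-1)⋯(a-j+1)/j!` for complex `a`. -/
noncomputable def cbinom (a : ℂ) (j : ℕ) : ℂ :=
  (∏ i ∈ Finset.range j, (a - i)) / (j.factorial : ℂ)

theorem cbinom_eq_ringChoose (a : ℂ) (j : ℕ) : cbinom a j = Ring.choose a j := by
  rw [Ring.choose_eq_smul, cbinom, ← descPochhammer_eval_eq_prod_range,
    ← Polynomial.aeval_eq_smeval, Polynomial.aeval_def, Polynomial.eval₂_eq_eval_map,
    descPochhammer_map, smul_eq_mul, div_eq_inv_mul]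

theorem hasSum_cbinom_mul_pow (t : ℂ) {x : ℂ} (hx : ‖x‖ < 1) :
    HasSum (fun k => cbinom t k * x ^ k) ((1 + x) ^ t) := by
  have h := one_add_cpow_hasFPowerSeriesOnBall_zero (a := t) |>.hasSum (y := x)
    (by rw [mem_eball_zero_iff, enorm_eq_nnnorm]; exact_mod_cast hx)
  simpa [cbinom_eq_ringChoose, binomialSeries, FormalMultilinearSeries.coeff_ofScalars,
    mul_comm] using h

theorem summable_norm_cbinom_mul_pow (t : ℂ) {r : ℝ} (hr0 : 0 ≤ r) (hr : r < 1) :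
    Summable fun k => ‖cbinom t k‖ * r ^ k := by
  lift r to NNReal using hr0
  have h := (binomialSeries ℂ t).summable_norm_mul_pow (r := r)
    ((ENNReal.coe_lt_one_iff.2 (mod_cast hr)).trans_le binomialSeries_radius_ge_one)
  simpa [binomialSeries, FormalMultilinearSeries.ofScalars_norm, cbinom_eq_ringChoose] using h

theorem ofReal_mul_cpow {r : ℝ} (hr : 0 < r) {v : ℂ} (hv : v ≠ 0) (t : ℂ) :
    ((r : ℂ) * v) ^ t = (r : ℂ) ^ t * v ^ t := by
  have hr0 : (r : ℂ) ≠ 0 := ofReal_ne_zero.2 hr.ne'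
  rw [cpow_def_of_ne_zero (mul_ne_zero hr0 hv), cpow_def_of_ne_zero hr0,
    cpow_def_of_ne_zero hv, log_ofReal_mul hr hv, ← exp_add, ofReal_log hr.le, add_mul]

theorem ofReal_pow_cpow {x : ℝ} (hx : 0 ≤ x) (m : ℕ) (t : ℂ) :
    ((x : ℂ) ^ m) ^ t = ((x : ℂ) ^ t) ^ m := by
  rw [← cpow_nat_mul, cpow_nat_mul'] <;> simp [arg_ofReal_of_nonneg hx, Real.pi_pos, Real.pi_nonneg]

theorem hasSum_cpow_ofReal_add {r : ℝ} (hr : 0 < r) {u : ℂ} (hu : ‖u‖ < r) (t : ℂ) :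
    HasSum (fun k => (r : ℂ) ^ t * (cbinom t k * (u / r) ^ k)) ((r + u) ^ t) := by
  have hr0 : (r : ℂ) ≠ 0 := ofReal_ne_zero.2 hr.ne'
  have hx : ‖u / r‖ < 1 := by
    rwa [norm_div, norm_real, Real.norm_of_nonneg hr.le, div_lt_one hr]
  have hne : 1 + u / r ≠ 0 := fun h => by
    simp [eq_neg_of_add_eq_zero_right h] at hx
  rw [show (r : ℂ) + u = r * (1 + u / r) by field_simp, ofReal_mul_cpow hr hne]
  exact (hasSum_cbinom_mul_pow t hx).mul_left _

theorem hasSum_tsum_tsum_mul_pow_succ {𝕜 : Type*} [NormedField 𝕜] [CompleteSpace 𝕜]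
    {b W : ℕ → 𝕜} {ε : ℝ} (hε : ε < 1) (hW : ∀ k, ‖W k‖ ≤ ε)
    (hb : Summable fun k => ‖b k * W k‖) :
    HasSum (fun k => b k * W k / (1 - W k)) (∑' n, ∑' k, b k * W k ^ (n + 1)) := by
  set f : ℕ → ℕ → 𝕜 := fun k n => b k * W k ^ (n + 1)
  have hε0 : 0 ≤ ε := (norm_nonneg _).trans (hW 0)
  have hrow : ∀ k, HasSum (f k) (b k * W k / (1 - W k)) := fun k => by
    have h := (hasSum_geometric_of_norm_lt_one ((hW k).trans_lt hε)).mul_left (b k * W k)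
    simpa [f, pow_succ', mul_assoc, div_eq_mul_inv] using h
  have hf : Summable (Function.uncurry f) := by
    refine Summable.of_norm_bounded (hb.mul_of_nonneg (summable_geometric_of_lt_one hε0 hε)
      (fun _ => norm_nonneg _) (fun n => pow_nonneg hε0 n)) fun ⟨k, n⟩ => ?_
    calc ‖b k * W k ^ (n + 1)‖ = ‖b k * W k‖ * ‖W k‖ ^ n := by
          rw [pow_succ', ← mul_assoc, norm_mul, norm_pow]
      _ ≤ ‖b k * W k‖ * ε ^ n := by gcongr; exact hW k
  have h := hf.hasSum.prod_fiberwise hrow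
  rwa [hf.tsum_prod_uncurry fun k => (hrow k).summable, ← hf.tsum_comm] at h

theorem div_inv_sub_one {𝕜 : Type*} [Field 𝕜] (c : 𝕜) {W : 𝕜} (hW : W ≠ 0) :
    c / (W⁻¹ - 1) = c * W / (1 - W) := by
  rw [show W⁻¹ - 1 = (1 - W) / W by field_simp, div_div_eq_mul_div]

noncomputable def lerchCoeff (lam1 lam2 s : ℂ) (k : ℕ) : ℂ :=
  lam1 ^ (-s) * cbinom (-s) k * (lam2 / lam1) ^ k

noncomputable def lerchRatio (z α1 α2 s : ℂ) (k : ℕ) : ℂ :=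
  z * α1 ^ (-s) * (α2 / α1) ^ k

theorem norm_mul_ofReal_cpow_neg_lt_one {α : ℝ} (hα : 0 < α) {z s : ℂ} (hz : ‖z‖ < α ^ s.re) :
    ‖z * (α : ℂ) ^ (-s)‖ < 1 := by
  rwa [norm_mul, norm_cpow_eq_rpow_re_of_pos hα, neg_re, Real.rpow_neg hα.le,
    ← div_eq_mul_inv, div_lt_one (by positivity)]

theorem norm_lerchRatio_le {α1 α2 : ℂ} (hα : ‖α2‖ ≤ ‖α1‖) (z s : ℂ) (k : ℕ) :
    ‖lerchRatio z α1 α2 s k‖ ≤ ‖z * α1 ^ (-s)‖ := by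
  rw [lerchRatio, norm_mul (z * _), norm_pow, norm_div]
  exact mul_le_of_le_one_right (norm_nonneg _)
    (pow_le_one₀ (by positivity) (div_le_one_of_le₀ hα (norm_nonneg _)))

theorem summable_norm_lerchCoeff_mul_lerchRatio {lam1 lam2 α1 α2 : ℂ}
    (hdom : ‖lam2 * α2‖ < ‖lam1 * α1‖) (z s : ℂ) :
    Summable fun k => ‖lerchCoeff lam1 lam2 s k * lerchRatio z α1 α2 s k‖ := by
  set D := ‖lam2 * α2‖ / ‖lam1 * α1‖
  have hD : ‖lam2 / lam1 * (α2 / α1)‖ = D := by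
    rw [div_mul_div_comm, norm_div]
  have h := (summable_norm_cbinom_mul_pow (-s) (by positivity : 0 ≤ D)
    ((div_lt_one ((norm_nonneg _).trans_lt hdom)).2 hdom)).mul_left ‖lam1 ^ (-s) * (z * α1 ^ (-s))‖
  refine h.congr fun k => ?_
  rw [← hD, ← norm_pow, ← norm_mul, ← norm_mul, lerchCoeff, lerchRatio]
  congr 1
  ring

theorem lerch_summand_eq {lam1 α1 α2 z : ℂ} (hlam1 : lam1 ≠ 0) (hα1 : α1 ≠ 0) (hα2 : α2 ≠ 0)
    (hz : z ≠ 0) (lam2 s : ℂ) (k : ℕ) :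
    cbinom (-s) k * lam1 ^ (-s - (k : ℂ)) * lam2 ^ k /
        (z⁻¹ * α1 ^ (s + (k : ℂ)) * α2 ^ (-(k : ℤ)) - 1) =
      lerchCoeff lam1 lam2 s k * lerchRatio z α1 α2 s k / (1 - lerchRatio z α1 α2 s k) := by
  have hW : lerchRatio z α1 α2 s k ≠ 0 := by simp [lerchRatio, hz, hα1, hα2]
  have hinv : z⁻¹ * α1 ^ (s + (k : ℂ)) * α2 ^ (-(k : ℤ)) = (lerchRatio z α1 α2 s k)⁻¹ := by
    rw [cpow_add _ _ hα1, cpow_natCast, zpow_neg, zpow_natCast, lerchRatio, cpow_neg, div_pow]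
    field_simp
  rw [hinv, div_inv_sub_one _ hW, cpow_sub _ _ hlam1, cpow_natCast, lerchCoeff, div_pow]
  ring

theorem hasSum_lerchCoeff_mul_lerchRatio_pow {lam1 α1 : ℝ} (hlam1 : 0 < lam1) (hα1 : 0 < α1)
    {lam2 α2 : ℂ} {m : ℕ} (hm : ‖lam2 * α2 ^ m‖ < lam1 * α1 ^ m) (s z : ℂ) :
    HasSum (fun k => lerchCoeff lam1 lam2 s k * lerchRatio z α1 α2 s k ^ m)
      (z ^ m * ((lam1 : ℂ) * (α1 : ℂ) ^ m + lam2 * α2 ^ m) ^ (-s)) := by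
  have hsplit : ((lam1 * α1 ^ m : ℝ) : ℂ) ^ (-s) = (lam1 : ℂ) ^ (-s) * ((α1 : ℂ) ^ (-s)) ^ m := by
    rw [ofReal_mul, mul_cpow_ofReal_nonneg hlam1.le (by positivity), ofReal_pow,
      ofReal_pow_cpow hα1.le]
  have h := (hasSum_cpow_ofReal_add (by positivity) hm (-s)).mul_left (z ^ m)
  rw [hsplit] at h
  push_cast at h
  refine h.congr_fun fun k => ?_
  simp only [lerchCoeff, lerchRatio]
  field_simp
  ring

theorem norm_mul_pow_succ_lt {lam1 α1 : ℝ} (hα1 : 0 < α1) {lam2 α2 : ℂ}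
    (hdom : ‖lam2 * α2‖ < lam1 * α1) (hα : ‖α2‖ ≤ α1) (n : ℕ) :
    ‖lam2 * α2 ^ (n + 1)‖ < lam1 * α1 ^ (n + 1) :=
  calc ‖lam2 * α2 ^ (n + 1)‖ = ‖α2‖ ^ n * ‖lam2 * α2‖ := by
        rw [pow_succ', ← mul_assoc, norm_mul, norm_pow, mul_comm]
    _ < α1 ^ n * (lam1 * α1) :=
        mul_lt_mul' (pow_le_pow_left₀ (norm_nonneg _) hα n) hdom (norm_nonneg _) (by positivity)
    _ = lam1 * α1 ^ (n + 1) := by ring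

theorem lerch_series_formula_degree_two_general
    (lam1 α1 : ℝ) (hlam1 : 0 < lam1) (hα1 : 1 < α1)
    (lam2 α2 : ℂ) (hα2 : 0 < ‖α2‖) (hα2' : ‖α2‖ < α1)
    (hdom : ‖lam2 * α2‖ < lam1 * α1)
    (a : ℕ → ℕ)
    (hBinet : ∀ n : ℕ, 1 ≤ n →
      (a n : ℂ) = (lam1 : ℂ) * (α1 : ℂ) ^ n + lam2 * α2 ^ n)
    (s z : ℂ) (hz0 : z ≠ 0) (hz : ‖z‖ < α1 ^ s.re) :
    Summable (fun k : ℕ => cbinom (-s) k * (lam1 : ℂ) ^ (-s - (k : ℂ)) * lam2 ^ k /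
        (z⁻¹ * (α1 : ℂ) ^ (s + (k : ℂ)) * α2 ^ (-(k : ℤ)) - 1)) ∧
    ∑' n : ℕ, z ^ (n + 1) * ((a (n + 1) : ℂ)) ^ (-s) =
      ∑' k : ℕ, cbinom (-s) k * (lam1 : ℂ) ^ (-s - (k : ℂ)) * lam2 ^ k /
        (z⁻¹ * (α1 : ℂ) ^ (s + (k : ℂ)) * α2 ^ (-(k : ℤ)) - 1) := by
  have hα1pos : 0 < α1 := zero_lt_one.trans hα1
  have hnormα1 : ‖(α1 : ℂ)‖ = α1 := by simp [hα1pos.le]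
  have hdomC : ‖lam2 * α2‖ < ‖(lam1 : ℂ) * α1‖ := by
    rwa [norm_mul (lam1 : ℂ), hnormα1, norm_real, Real.norm_of_nonneg hlam1.le]
  have key := hasSum_tsum_tsum_mul_pow_succ (norm_mul_ofReal_cpow_neg_lt_one hα1pos hz)
    (norm_lerchRatio_le (hnormα1.symm ▸ hα2'.le) z s)
    (summable_norm_lerchCoeff_mul_lerchRatio hdomC z s)
  simp only [lerch_summand_eq (ofReal_ne_zero.2 hlam1.ne') (ofReal_ne_zero.2 hα1pos.ne')
    (norm_pos_iff.1 hα2) hz0]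
  refine ⟨key.summable, key.tsum_eq.symm ▸ tsum_congr fun n => ?_⟩
  rw [hBinet (n + 1) n.succ_pos]
  exact (hasSum_lerchCoeff_mul_lerchRatio_pow hlam1 hα1pos
    (norm_mul_pow_succ_lt hα1pos hdom hα2'.le n) s z).tsum_eq.symm

theorem lerch_series_formula_degree_two
    (lam1 α1 : ℝ) (hlam1 : 0 < lam1) (hα1 : 1 < α1)
    (lam2 α2 : ℂ) (hα2 : 0 < ‖α2‖) (hα2' : ‖α2‖ < α1)
    (hdom : ‖lam2 * α2‖ < lam1 * α1)
    (a : ℕ → ℕ) (hpos : ∀ n, 1 ≤ n → 0 < a n)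
    (hBinet : ∀ n : ℕ, 1 ≤ n →
      (a n : ℂ) = (lam1 : ℂ) * (α1 : ℂ) ^ n + lam2 * α2 ^ n)
    (s z : ℂ) (hz0 : z ≠ 0) (hz : ‖z‖ < α1 ^ s.re)
    (hne : ∀ k : ℕ, z⁻¹ * (α1 : ℂ) ^ (s + (k : ℂ)) * α2 ^ (-(k : ℤ)) ≠ 1) :
    Summable (fun k : ℕ => cbinom (-s) k * (lam1 : ℂ) ^ (-s - (k : ℂ)) * lam2 ^ k /
        (z⁻¹ * (α1 : ℂ) ^ (s + (k : ℂ)) * α2 ^ (-(k : ℤ)) - 1)) ∧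
    ∑' n : ℕ, z ^ (n + 1) * ((a (n + 1) : ℂ)) ^ (-s) =
      ∑' k : ℕ, cbinom (-s) k * (lam1 : ℂ) ^ (-s - (k : ℂ)) * lam2 ^ k /
        (z⁻¹ * (α1 : ℂ) ^ (s + (k : ℂ)) * α2 ^ (-(k : ℤ)) - 1) :=
  lerch_series_formula_degree_two_general lam1 α1 hlam1 hα1 lam2 α2 hα2 hα2' hdom a hBinet s z hz0
    hz
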